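/- Let a, b, c, d ∈ D_n with a ≤ b ≤ c ≤ a*, a ≤ d, and d ≤ c & b*. Then the monotone function H : Bool^3 → D_n defined by H(000)=a, H(001)=b, H(010)=d, H(011)=c, H(100)=c*, H(101)=d*, H(110)=b*, H(111)=a* is well-defined and corresponds to a self-dual element of D_{n+3}. -/
import Mathlib


abbrev BF (n : ℕ) := (Fin n → Bool) → Bool

def dual {n : ℕ} (f : BF n) : BF n := fun v => ! f (fun i => ! v i)

/-- The function `H : Bool³ → (Boolean functions)` with values
`a, b, d, c, c*, d*, b*, a*` on `000, 001, 010, 011, 100, 101, 110, 111`. -/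
def H3 {n : ℕ} (a b c d : BF n) : (Fin 3 → Bool) → BF n := fun u =>
  match u 0, u 1, u 2 with
  | false, false, false => a
  | false, false, true  => b
  | false, true,  false => d
  | false, true,  true  => c
  | true,  false, false => dual c
  | true,  false, true  => dual d
  | true,  true,  false => dual b
  | true,  true,  true  => dual a

lemma dual_dual {n : ℕ} (f : BF n) : dual (dual f) = f := by
  funext v
  simp [dual]

lemma dual_le_dual {n : ℕ} {f g : BF n} (h : f ≤ g) : dual g ≤ dual f := by
  intro v
  simp only [dual]
  have := h (fun i => ! v i)
  revert this
  cases f (fun i => ! v i) <;> cases g (fun i => ! v i) <;> simp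

lemma dual_mono {n : ℕ} {f : BF n} (hf : Monotone f) : Monotone (dual f) := by
  intro v w hvw
  simp only [dual]
  have hnot : (fun i => ! w i) ≤ (fun i => ! v i) := by
    intro i
    have := hvw i
    revert this
    rcases hv : v i <;> rcases hw : w i <;> simp [hv, hw]
  have := hf hnot
  revert this
  cases f (fun i => ! v i) <;> cases f (fun i => ! w i) <;> simp_all

theorem stmt_10 {n : ℕ} (a b c d : BF n)
    (ha : Monotone a) (hb : Monotone b) (hc : Monotone c) (hd : Monotone d)
    (hab : a ≤ b) (hbc : b ≤ c) (hca : c ≤ dual a)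
    (had : a ≤ d) (hdcb : d ≤ c ⊓ dual b) :
    (∀ u, Monotone (H3 a b c d u)) ∧ Monotone (H3 a b c d) ∧
      (∀ u : Fin 3 → Bool, H3 a b c d u = dual (H3 a b c d (fun i => ! u i))) := by
  have hac' : a ≤ c := hab.trans hbc
  have hdc : d ≤ c := hdcb.trans inf_le_left
  have hdb : d ≤ dual b := hdcb.trans inf_le_right
  have hbd : b ≤ dual d := by
    have := dual_le_dual hdb; rwa [dual_dual] at this
  have hac : a ≤ dual c := by
    have := dual_le_dual hca; rwa [dual_dual] at this
  have haa : a ≤ dual a := hac'.trans hca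
  have hba : b ≤ dual a := hbc.trans hca
  have hda : d ≤ dual a := hdc.trans hca
  have had' : a ≤ dual d := hab.trans hbd
  have hab' : a ≤ dual b := had.trans hdb
  have hcd : dual c ≤ dual d := dual_le_dual hdc
  have hcb : dual c ≤ dual b := dual_le_dual hbc
  have hca' : dual c ≤ dual a := dual_le_dual hac'
  have hda'' : dual d ≤ dual a := dual_le_dual had
  have hba'' : dual b ≤ dual a := dual_le_dual hab
  refine ⟨?_, ?_, ?_⟩
  · intro u
    rcases hu0 : u 0 <;> rcases hu1 : u 1 <;> rcases hu2 : u 2 <;>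
      simp only [H3, hu0, hu1, hu2] <;>
      first
        | exact ha | exact hb | exact hc | exact hd
        | exact dual_mono ha | exact dual_mono hb
        | exact dual_mono hc | exact dual_mono hd
  · intro u v huv
    have h0 := huv 0; have h1 := huv 1; have h2 := huv 2
    rcases hu0 : u 0 <;> rcases hu1 : u 1 <;> rcases hu2 : u 2 <;>
      rcases hv0 : v 0 <;> rcases hv1 : v 1 <;> rcases hv2 : v 2 <;>
      rw [hu0, hv0] at h0 <;> rw [hu1, hv1] at h1 <;> rw [hu2, hv2] at h2 <;>
      first
        | exact absurd h0 (by decide)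
        | exact absurd h1 (by decide)
        | exact absurd h2 (by decide)
        | (simp only [H3, hu0, hu1, hu2, hv0, hv1, hv2]
           first
            | exact le_refl _
            | exact hab | exact hbc | exact hca | exact had | exact hdc | exact hdb
            | exact hbd | exact hac | exact haa | exact hba | exact hda
            | exact had' | exact hab' | exact hcd | exact hcb | exact hca'
            | exact hda'' | exact hba'' | exact hac')
  · intro u
    rcases hu0 : u 0 <;> rcases hu1 : u 1 <;> rcases hu2 : u 2 <;>
      simp [H3, hu0, hu1, hu2, dual_dual]
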